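/- arXiv:2102.09165 — 2 statements merged into one kernel-verified Lean document; each statement's English description precedes it below -/
import Mathlib

section
/- Let p and r be distinct primes with p ≥ 3, and let G be a finite group with G = O^{p'}(G) acting faithfully and completely reducibly on an elementary abelian r-group V (viewed as a semisimple F_r[G]-module). Assume that the p-part of |G| equals p^c with c ≥ 2, that O_p(G) is cyclic of order p and acts fixed-point-freely on V, and that every nonidentity element of V is fixed by exactly one subgroup of G of order p^{c-1}. Then V is a primitive G-module. -/
/-- The `p`-core `O_p(G)` of a group `G`: the largest normal `p`-subgroup of `G`,
realized as the join of all normal `p`-subgroups. -/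
def pCore (p : ℕ) (G : Type*) [Group G] : Subgroup G :=
  ⨆ N : {N : Subgroup G // N.Normal ∧ IsPGroup p N}, (N : Subgroup G)

instance pCore_normal (p : ℕ) (G : Type*) [Group G] : (pCore p G).Normal := by
  constructor
  intro n hn g
  refine Subgroup.iSup_induction (C := fun x => g * x * g⁻¹ ∈ pCore p G)
    (fun N : {N : Subgroup G // N.Normal ∧ IsPGroup p N} => (N : Subgroup G)) hn ?_ ?_ ?_
  · intro N x hx
    exact le_iSup
      (fun N : {N : Subgroup G // N.Normal ∧ IsPGroup p N} => (N : Subgroup G)) N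
      (N.2.1.conj_mem x hx g)
  · simpa using (pCore p G).one_mem
  · intro x y hx hy
    have h := (pCore p G).mul_mem hx hy
    have e : g * x * g⁻¹ * (g * y * g⁻¹) = g * (x * y) * g⁻¹ := by group
    rwa [e] at h

/-- `O^{p'}(G)`: the smallest normal subgroup of `G` whose quotient has order
coprime to `p`, realized as the intersection of all normal subgroups of index
not divisible by `p`. -/
def pResidual (p : ℕ) (G : Type*) [Group G] : Subgroup G :=
  ⨅ N : {N : Subgroup G // N.Normal ∧ ¬ p ∣ N.index}, (N : Subgroup G)

/-- An irreducible `G`-module `V` over `ZMod r` is imprimitive if it decomposes as a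
direct sum of `n ≥ 2` nonzero subspaces that are permuted transitively by the action
of `G`. -/
def IsImprimitiveModule (G : Type) [Group G] (r : ℕ) (V : Type) [AddCommGroup V]
    [Module (ZMod r) V] [DistribMulAction G V] [SMulCommClass G (ZMod r) V] : Prop :=
  ∃ n : ℕ, 2 ≤ n ∧ ∃ W : Fin n → Submodule (ZMod r) V,
    (∀ i, W i ≠ ⊥) ∧ iSupIndep W ∧ (⨆ i, W i) = ⊤ ∧
    (∀ g : G, ∃ σ : Equiv.Perm (Fin n), ∀ i,
        (W i).map (DistribMulAction.toLinearMap (ZMod r) V g) = W (σ i)) ∧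
    (∀ i j : Fin n, ∃ g : G,
        (W i).map (DistribMulAction.toLinearMap (ZMod r) V g) = W j)

private lemma auxPowSmul {G V : Type*} [Monoid G] [AddMonoid V] [DistribMulAction G V]
    (g : G) (x : V) (h : g • x = x) (t : ℕ) : g ^ t • x = x := by
  induction t with
  | zero => rw [pow_zero, one_smul]
  | succ t ih => rw [pow_succ, mul_smul, h, ih]

private lemma auxMemPow {G : Type*} [Group G] (D : Subgroup G) (d : G) (hd : d ∈ D) :
    d ^ Nat.card D = 1 := by
  have h1 : (⟨d, hd⟩ : D) ^ Nat.card D = 1 := pow_card_eq_one'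
  have := congrArg (Subtype.val) h1
  rwa [SubmonoidClass.coe_pow, OneMemClass.coe_one] at this

/-- Let `p, r` be distinct primes with `p ≥ 3` and let `G` be a finite group with
`G = O^{p'}(G)` acting faithfully and completely reducibly on an elementary abelian
`r`-group `V`. Assume the `p`-part of `|G|` is `p ^ c` with `c ≥ 2`, that `O_p(G)` is
cyclic of order `p` acting fixed-point-freely on `V`, and that every nonzero element of
`V` is fixed by exactly one subgroup of `G` of order `p ^ (c - 1)`. Then `V` is a
primitive `G`-module (i.e., irreducible and not imprimitive). -/
theorem primitive_of_unique_fixing_subgroup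
    (p r : ℕ) (hp : p.Prime) (hr : r.Prime) (hne : p ≠ r) (hp3 : 3 ≤ p)
    (G : Type) [Group G] [Finite G] (hres : pResidual p G = ⊤)
    (V : Type) [AddCommGroup V] [Module (ZMod r) V] [Finite V]
    [DistribMulAction G V] [SMulCommClass G (ZMod r) V]
    (hfaithful : ∀ g : G, (∀ v : V, g • v = v) → g = 1)
    (hcompred : ∀ U : Submodule (ZMod r) V, (∀ g : G, ∀ v ∈ U, g • v ∈ U) →
      ∃ U' : Submodule (ZMod r) V, (∀ g : G, ∀ v ∈ U', g • v ∈ U') ∧ IsCompl U U')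
    (c : ℕ) (hc : 2 ≤ c) (hpart : (Nat.card G).factorization p = c)
    (hOpcyc : IsCyclic ↥(pCore p G)) (hOpcard : Nat.card ↥(pCore p G) = p)
    (hfpf : ∀ g ∈ pCore p G, g ≠ 1 → ∀ v : V, v ≠ 0 → g • v ≠ v)
    (hfix : ∀ v : V, v ≠ 0 →
      ∃! D : Subgroup G, Nat.card ↥D = p ^ (c - 1) ∧ ∀ g ∈ D, g • v = v) :
    Nontrivial V ∧
    (∀ U : Submodule (ZMod r) V, (∀ g : G, ∀ v ∈ U, g • v ∈ U) → U = ⊥ ∨ U = ⊤) ∧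
    ¬ IsImprimitiveModule G r V := by
  have hpc1 : p ^ (c - 1) ≠ 1 := by
    have h1 : p ≤ p ^ (c - 1) := Nat.le_self_pow (by omega) p
    omega
  refine ⟨?_, ?_, ?_⟩
  · -- Nontrivial V
    by_contra hnt
    have hsub : Subsingleton V := not_nontrivial_iff_subsingleton.mp hnt
    have hG : ∀ g : G, g = 1 := fun g => hfaithful g fun v => Subsingleton.elim _ _
    have hG1 : Nat.card G = 1 :=
      Nat.card_eq_one_iff_unique.mpr ⟨⟨fun a b => (hG a).trans (hG b).symm⟩, ⟨1⟩⟩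
    rw [hG1, Nat.factorization_one] at hpart
    simp at hpart
    omega
  · -- irreducibility
    intro U hU
    by_contra hcon
    push_neg at hcon
    obtain ⟨hUbot, hUtop⟩ := hcon
    obtain ⟨U', hU', hcompl⟩ := hcompred U hU
    have hU'bot : U' ≠ ⊥ := by
      intro h
      rw [h] at hcompl
      exact hUtop (codisjoint_bot.mp hcompl.codisjoint)
    obtain ⟨u0, hu0U, hu0ne⟩ := Submodule.exists_mem_ne_zero_of_ne_bot hUbot
    obtain ⟨w0, hw0U, hw0ne⟩ := Submodule.exists_mem_ne_zero_of_ne_bot hU'bot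
    have hdisjU : ∀ z : V, z ∈ U → z ∈ U' → z = 0 := fun z h1 h2 =>
      Submodule.disjoint_def.mp hcompl.disjoint z h1 h2
    have hsum_ne : ∀ u ∈ U, u ≠ 0 → ∀ u' ∈ U', u + u' ≠ 0 := by
      intro u hu hune u' hu' h
      have he : u = -u' := eq_neg_of_add_eq_zero_left h
      have : u ∈ U' := by rw [he]; exact neg_mem hu'
      exact hune (hdisjU u hu this)
    have fix2 : ∀ u ∈ U, ∀ u' ∈ U', ∀ d : G, d • (u + u') = u + u' →
        d • u = u ∧ d • u' = u' := by
      intro u hu u' hu' d hdv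
      have hsum : d • u + d • u' = u + u' := by rw [← smul_add]; exact hdv
      have h1 : d • u - u = u' - d • u' := by
        rw [sub_eq_sub_iff_add_eq_add, hsum, add_comm]
      have h2 : d • u - u = 0 := by
        apply hdisjU
        · exact sub_mem (hU d u hu) hu
        · rw [h1]; exact sub_mem hu' (hU' d u' hu')
      have h3 : d • u = u := by rwa [sub_eq_zero] at h2
      refine ⟨h3, ?_⟩
      have := hsum
      rw [h3] at this
      exact add_left_cancel this
    obtain ⟨D, ⟨hDcard, hDfix⟩, _⟩ := hfix (u0 + w0) (hsum_ne u0 hu0U hu0ne w0 hw0U)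
    have hD0 : ∀ d ∈ D, d • u0 = u0 ∧ d • w0 = w0 := fun d hd =>
      fix2 u0 hu0U w0 hw0U d (hDfix d hd)
    have claimU : ∀ u ∈ U, u ≠ 0 → ∀ d ∈ D, d • u = u := by
      intro u hu hune d hd
      obtain ⟨D', ⟨hD'card, hD'fix⟩, _⟩ := hfix (u + w0) (hsum_ne u hu hune w0 hw0U)
      have hD' : ∀ e ∈ D', e • u = u ∧ e • w0 = w0 := fun e he =>
        fix2 u hu w0 hw0U e (hD'fix e he)
      have hDD' : D = D' := by
        obtain ⟨Dc, _, huniq⟩ := hfix w0 hw0ne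
        rw [huniq D ⟨hDcard, fun e he => (hD0 e he).2⟩,
          huniq D' ⟨hD'card, fun e he => (hD' e he).2⟩]
      exact (hD' d (hDD' ▸ hd)).1
    have claimU' : ∀ u' ∈ U', u' ≠ 0 → ∀ d ∈ D, d • u' = u' := by
      intro u' hu' hu'ne d hd
      obtain ⟨D', ⟨hD'card, hD'fix⟩, _⟩ := hfix (u0 + u') (hsum_ne u0 hu0U hu0ne u' hu')
      have hD' : ∀ e ∈ D', e • u0 = u0 ∧ e • u' = u' := fun e he =>
        fix2 u0 hu0U u' hu' e (hD'fix e he)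
      have hDD' : D = D' := by
        obtain ⟨Dc, _, huniq⟩ := hfix u0 hu0ne
        rw [huniq D ⟨hDcard, fun e he => (hD0 e he).1⟩,
          huniq D' ⟨hD'card, fun e he => (hD' e he).1⟩]
      exact (hD' d (hDD' ▸ hd)).2
    have hD1 : ∀ d ∈ D, d = 1 := by
      intro d hd
      apply hfaithful
      intro v
      have hv : v ∈ U ⊔ U' := by rw [hcompl.codisjoint.eq_top]; exact Submodule.mem_top
      obtain ⟨a, ha, b, hb, hab⟩ := Submodule.mem_sup.mp hv
      have hda : d • a = a := by
        by_cases h : a = 0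
        · rw [h, smul_zero]
        · exact claimU a ha h d hd
      have hdb : d • b = b := by
        by_cases h : b = 0
        · rw [h, smul_zero]
        · exact claimU' b hb h d hd
      rw [← hab, smul_add, hda, hdb]
    have hcard1 : Nat.card D = 1 := by
      rw [(Subgroup.eq_bot_iff_forall D).mpr hD1]
      simp
    rw [hDcard] at hcard1
    exact hpc1 hcard1
  · -- not imprimitive
    intro himp
    obtain ⟨n, hn2, W, hWbot, hindep, hWsup, hperm, _htrans⟩ := himp
    obtain ⟨m, rfl⟩ : ∃ m, n = m + 2 := ⟨n - 2, by omega⟩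
    have h01 : (0 : Fin (m + 2)) ≠ 1 := by
      intro h
      have := congrArg Fin.val h
      simp at this
    have hWle : ∀ k l : Fin (m + 2), k ≠ l → W k ≤ ⨆ m' ≠ l, W m' := fun k l hkl =>
      le_iSup₂ (f := fun m' (_ : m' ≠ l) => W m') k hkl
    have hW2 : ∀ k l : Fin (m + 2), k ≠ l → ∀ z : V, z ∈ W k → z ∈ W l → z = 0 :=
      fun k l hkl z hzk hzl =>
        Submodule.disjoint_def.mp (hindep k) z hzk (hWle l k (Ne.symm hkl) hzl)
    have comp : ∀ (a b i j : Fin (m + 2)) (x y u u' : V), a ≠ b → i ≠ j →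
        x ∈ W a → y ∈ W b → u ∈ W i → u' ∈ W j → x ≠ 0 → y ≠ 0 →
        x + y = u + u' → (x = u ∧ y = u') ∨ (x = u' ∧ y = u) := by
      intro a b i j x y u u' hab hij hxa hyb hui huj hx0 hy0 hsum
      have ha : a = i ∨ a = j := by
        by_contra hcon
        push_neg at hcon
        apply hx0
        apply Submodule.disjoint_def.mp (hindep a) x hxa
        have hx : x = u + u' - y := by rw [← hsum]; abel
        rw [hx]
        exact sub_mem (add_mem (hWle i a (Ne.symm hcon.1) hui)
          (hWle j a (Ne.symm hcon.2) huj)) (hWle b a (Ne.symm hab) hyb)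
      have hb : b = i ∨ b = j := by
        by_contra hcon
        push_neg at hcon
        apply hy0
        apply Submodule.disjoint_def.mp (hindep b) y hyb
        have hy : y = u + u' - x := by rw [← hsum]; abel
        rw [hy]
        exact sub_mem (add_mem (hWle i b (Ne.symm hcon.1) hui)
          (hWle j b (Ne.symm hcon.2) huj)) (hWle a b hab hxa)
      rcases ha with ha | ha
      · have hb' : b = j := by
          rcases hb with hb | hb
          · exact absurd (ha.trans hb.symm) hab
          · exact hb
        rw [ha] at hxa
        rw [hb'] at hyb
        have h1 : x - u = u' - y := by
          rw [sub_eq_sub_iff_add_eq_add, hsum, add_comm]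
        have h2 : x - u = 0 := by
          apply hW2 i j hij
          · exact sub_mem hxa hui
          · rw [h1]; exact sub_mem huj hyb
        have h3 : x = u := by rwa [sub_eq_zero] at h2
        refine Or.inl ⟨h3, ?_⟩
        have := hsum
        rw [h3] at this
        exact add_left_cancel this
      · have hb' : b = i := by
          rcases hb with hb | hb
          · exact hb
          · exact absurd (ha.trans hb.symm) hab
        rw [ha] at hxa
        rw [hb'] at hyb
        have h1 : x - u' = u - y := by
          rw [sub_eq_sub_iff_add_eq_add, hsum]
        have h2 : x - u' = 0 := by
          apply hW2 j i (Ne.symm hij)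
          · exact sub_mem hxa huj
          · rw [h1]; exact sub_mem hui hyb
        have h3 : x = u' := by rwa [sub_eq_zero] at h2
        refine Or.inr ⟨h3, ?_⟩
        have h4 := hsum
        rw [h3, add_comm u u'] at h4
        exact add_left_cancel h4
    have hsum_ne : ∀ (i j : Fin (m + 2)), i ≠ j → ∀ u ∈ W i, u ≠ 0 → ∀ u' ∈ W j,
        u + u' ≠ 0 := by
      intro i j hij u hu hune u' hu' h
      have he : u = -u' := eq_neg_of_add_eq_zero_left h
      have : u ∈ W j := by rw [he]; exact neg_mem hu'
      exact hune (hW2 i j hij u hu this)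
    have fix_comp : ∀ (i j : Fin (m + 2)), i ≠ j → ∀ (u u' : V), u ∈ W i → u' ∈ W j →
        u ≠ 0 → u' ≠ 0 → ∀ d : G, d ^ (p ^ (c - 1)) = 1 → d • (u + u') = u + u' →
        d • u = u ∧ d • u' = u' := by
      intro i j hij u u' hui huj hu0 hu'0 d hdord hdv
      obtain ⟨σ, hσ⟩ := hperm d
      have hxmem : d • u ∈ W (σ i) := by
        rw [← hσ i]
        exact Submodule.mem_map_of_mem hui
      have hymem : d • u' ∈ W (σ j) := by
        rw [← hσ j]
        exact Submodule.mem_map_of_mem huj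
      have hx0 : d • u ≠ 0 := by
        intro h
        apply hu0
        have := congrArg (fun z => d⁻¹ • z) h
        simpa using this
      have hy0 : d • u' ≠ 0 := by
        intro h
        apply hu'0
        have := congrArg (fun z => d⁻¹ • z) h
        simpa using this
      have hsum : d • u + d • u' = u + u' := by rw [← smul_add]; exact hdv
      rcases comp (σ i) (σ j) i j (d • u) (d • u') u u'
        (fun h => hij (σ.injective h)) hij hxmem hymem hui huj hx0 hy0 hsum with
        ⟨h1, h2⟩ | ⟨h1, h2⟩
      · exact ⟨h1, h2⟩
      · exfalso
        have hodd : Odd (p ^ (c - 1)) := (hp.odd_of_ne_two (by omega)).pow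
        obtain ⟨t, ht⟩ := hodd
        have hsq : (d ^ 2) • u' = u' := by rw [pow_two, mul_smul, h2, h1]
        have h2t : (d ^ 2) ^ t • u' = u' := auxPowSmul _ _ hsq t
        have h3 : d ^ (p ^ (c - 1)) • u = u' := by
          rw [ht, pow_succ, mul_smul, h1, pow_mul, h2t]
        rw [hdord, one_smul] at h3
        apply hu0
        apply hW2 i j hij u hui
        rw [h3]
        exact huj
    obtain ⟨u0, hu0W, hu0ne⟩ := Submodule.exists_mem_ne_zero_of_ne_bot (hWbot 0)
    obtain ⟨u1, hu1W, hu1ne⟩ := Submodule.exists_mem_ne_zero_of_ne_bot (hWbot 1)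
    obtain ⟨D, ⟨hDcard, hDfix⟩, _⟩ :=
      hfix (u0 + u1) (hsum_ne 0 1 h01 u0 hu0W hu0ne u1 hu1W)
    have hD01 : ∀ d ∈ D, d • u0 = u0 ∧ d • u1 = u1 := fun d hd =>
      fix_comp 0 1 h01 u0 u1 hu0W hu1W hu0ne hu1ne d
        (by rw [← hDcard]; exact auxMemPow D d hd) (hDfix d hd)
    have claim : ∀ (j : Fin (m + 2)) (w : V), w ∈ W j → w ≠ 0 →
        (∀ d ∈ D, d • w = w) → ∀ i : Fin (m + 2), i ≠ j → ∀ u ∈ W i, u ≠ 0 →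
        ∀ d ∈ D, d • u = u := by
      intro j w hwj hw0 hDw i hij u hui hune d hd
      obtain ⟨D', ⟨hD'card, hD'fix⟩, _⟩ :=
        hfix (u + w) (hsum_ne i j hij u hui hune w hwj)
      have hD' : ∀ e ∈ D', e • u = u ∧ e • w = w := fun e he =>
        fix_comp i j hij u w hui hwj hune hw0 e
          (by rw [← hD'card]; exact auxMemPow D' e he) (hD'fix e he)
      have hDD' : D = D' := by
        obtain ⟨Dc, _, huniq⟩ := hfix w hw0
        rw [huniq D ⟨hDcard, hDw⟩, huniq D' ⟨hD'card, fun e he => (hD' e he).2⟩]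
      exact (hD' d (hDD' ▸ hd)).1
    have hfixall : ∀ i : Fin (m + 2), ∀ u ∈ W i, ∀ d ∈ D, d • u = u := by
      intro i u hui d hd
      by_cases hune : u = 0
      · rw [hune, smul_zero]
      · by_cases hi : i = 0
        · exact claim 1 u1 hu1W hu1ne (fun e he => (hD01 e he).2) i
            (by rw [hi]; exact h01) u hui hune d hd
        · exact claim 0 u0 hu0W hu0ne (fun e he => (hD01 e he).1) i hi u hui hune d hd
    have hD1 : ∀ d ∈ D, d = 1 := by
      intro d hd
      apply hfaithful
      intro v
      have hle : ∀ i : Fin (m + 2), W i ≤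
          LinearMap.eqLocus (DistribMulAction.toLinearMap (ZMod r) V d) LinearMap.id := by
        intro i u hu
        rw [LinearMap.mem_eqLocus]
        show d • u = u
        exact hfixall i u hu d hd
      have htop : (⊤ : Submodule (ZMod r) V) ≤
          LinearMap.eqLocus (DistribMulAction.toLinearMap (ZMod r) V d) LinearMap.id := by
        rw [← hWsup]
        exact iSup_le hle
      have hv := htop (Submodule.mem_top (x := v))
      rw [LinearMap.mem_eqLocus] at hv
      exact hv
    have hcard1 : Nat.card D = 1 := by
      rw [(Subgroup.eq_bot_iff_forall D).mpr hD1]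
      simp
    rw [hDcard] at hcard1
    exact hpc1 hcard1
end

section
/- Let P be a Sylow p-subgroup of a finite group G and let Z be a subgroup with Z ≤ P ∩ Z(G). Assume that P is either abelian or splits over Z (i.e., Z has a complement in P). Then Z ∩ [G,G] = 1. -/
/-!
For central `z ∈ [G, G]`, the transfer `G → P/[P, P]` sends `z` to the class of `z ^ [G : P]`
and also kills it, so `z ^ [G : P] ∈ [P, P]`. Under either hypothesis `Z ∩ [P, P] = 1` (if
`P = Z K` with `Z` central then `[P, P] = [K, K] ≤ K`), so every `z ∈ Z ∩ [G, G]` satisfies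
`z ^ [G : P] = 1`, whence `z = 1` because `[G : P]` is prime to `p`.
-/

open Subgroup
open scoped commutatorElement

section

variable {G : Type*} [Group G]

theorem commutatorElement_mul_mul_of_mem_center {z₁ z₂ : G} (h₁ : z₁ ∈ center G)
    (h₂ : z₂ ∈ center G) (a b : G) : ⁅z₁ * a, z₂ * b⁆ = ⁅a, b⁆ := by
  have hc₁ (g : G) : Commute z₁ g := (mem_center_iff.mp h₁ g).symm
  have hc₂ (g : G) : Commute z₂ g := (mem_center_iff.mp h₂ g).symm
  rw [commutatorElement_mul_left_eq_conj_mul, commutatorElement_mul_right_eq_mul_conj,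
    (hc₁ _).commutator_eq, (hc₂ a).symm.commutator_eq, one_mul, mul_one,
    (hc₂ _).mul_inv_cancel, (hc₁ _).mul_inv_cancel]

theorem commutator_sup_self_eq_of_le_center {Z : Subgroup G} (hZ : Z ≤ center G)
    (K : Subgroup G) : ⁅Z ⊔ K, Z ⊔ K⁆ = ⁅K, K⁆ := by
  have : Z.Normal := ⟨fun n hn g => by rwa [mem_center_iff.mp (hZ hn) g, mul_inv_cancel_right]⟩
  refine le_antisymm (commutator_le.mpr ?_) (commutator_mono le_sup_right le_sup_right)
  intro g₁ hg₁ g₂ hg₂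
  obtain ⟨z₁, hz₁, k₁, hk₁, rfl⟩ := mem_sup_of_normal_left.mp hg₁
  obtain ⟨z₂, hz₂, k₂, hk₂, rfl⟩ := mem_sup_of_normal_left.mp hg₂
  rw [commutatorElement_mul_mul_of_mem_center (hZ hz₁) (hZ hz₂)]
  exact commutator_mem_commutator hk₁ hk₂

theorem pow_index_mem_commutator_of_mem_center {H : Subgroup G} [H.FiniteIndex] {z : G}
    (hzc : z ∈ center G) (hz : z ∈ commutator G) : z ^ H.index ∈ ⁅H, H⁆ := by
  have hconj (k : ℕ) (g : G) (_ : g⁻¹ * z ^ k * g ∈ H) : g⁻¹ * z ^ k * g = z ^ k := by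
    rw [mem_center_iff.mp (pow_mem hzc k) g⁻¹, inv_mul_cancel_right]
  have htransfer := MonoidHom.transfer_eq_pow (Abelianization.of : H →* Abelianization H) z hconj
  rw [Abelianization.commutator_subset_ker _ hz, eq_comm, ← MonoidHom.mem_ker,
    Abelianization.ker_of] at htransfer
  rw [← map_subtype_commutator]
  exact ⟨_, htransfer, rfl⟩

theorem Sylow.eq_one_of_pow_index_eq_one {p : ℕ} [Fact p.Prime] (P : Sylow p G) [P.FiniteIndex]
    {g : G} (hg : g ∈ P) (h : g ^ P.index = 1) : g = 1 := by
  have := (P.2.powEquiv' P.not_dvd_index).injective (a₁ := ⟨g, hg⟩) (a₂ := 1)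
    (Subtype.ext (by simpa using h))
  simpa using congrArg Subtype.val this

theorem Sylow.inf_commutator_eq_bot_of_inf_commutator_eq_bot {p : ℕ} [Fact p.Prime]
    (P : Sylow p G) [P.FiniteIndex] {Z : Subgroup G} (hZ : Z ≤ (P : Subgroup G) ⊓ center G)
    (hZP : Z ⊓ ⁅(P : Subgroup G), P⁆ = ⊥) : Z ⊓ commutator G = ⊥ := by
  refine eq_bot_iff.mpr fun z ⟨hzZ, hz⟩ => P.eq_one_of_pow_index_eq_one (hZ hzZ).1 ?_
  have hpow : z ^ P.index ∈ Z ⊓ ⁅(P : Subgroup G), P⁆ :=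
    ⟨Z.pow_mem hzZ _, pow_index_mem_commutator_of_mem_center (hZ hzZ).2 hz⟩
  rwa [hZP, mem_bot] at hpow

end

/-- Let `P` be a Sylow `p`-subgroup of a finite group `G` and `Z ≤ P ∩ Z(G)`. If `P` is
abelian or splits over `Z`, then `Z ∩ [G, G] = 1`. -/
theorem inf_commutator_eq_bot_of_central_sylow_split
    (p : ℕ) (hp : p.Prime) (G : Type) [Group G] [Finite G]
    (P : Sylow p G) (Z : Subgroup G)
    (hZ : Z ≤ (P : Subgroup G) ⊓ Subgroup.center G)
    (hPab : IsMulCommutative (P : Subgroup G) ∨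
      ∃ K : Subgroup G, K ≤ (P : Subgroup G) ∧ Z ⊓ K = ⊥ ∧ Z ⊔ K = (P : Subgroup G)) :
    Z ⊓ commutator G = ⊥ := by
  have : Fact p.Prime := ⟨hp⟩
  refine P.inf_commutator_eq_bot_of_inf_commutator_eq_bot hZ ?_
  rcases hPab with hab | ⟨K, -, hZK, hZKP⟩
  · rw [commutator_self_eq_bot_iff.mpr hab, inf_bot_eq]
  · rw [← hZKP, commutator_sup_self_eq_of_le_center (hZ.trans inf_le_right)]
    exact eq_bot_mono (inf_le_inf_left Z (commutator_le_self K)) hZK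
end
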